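/- Let n ≥ 3 and let π ∈ S_n. Then π avoids both the pattern 213 and the pattern 312, π² avoids the consecutive pattern 213, and π(1) = 1, if and only if π = 1 ⊕ σ for some σ ∈ S_{n−1} such that σ avoids both 213 and 312 and σ² avoids the consecutive pattern 213. -/

import Mathlib

/-- `π` contains the (classical) pattern `σ`: there is a strictly increasing
sequence of positions on which `π` is order isomorphic to `σ`. -/
def ContainsPat {n k : ℕ} (π : Equiv.Perm (Fin n)) (σ : Equiv.Perm (Fin k)) : Prop :=
  ∃ f : Fin k → Fin n, StrictMono f ∧ ∀ a b : Fin k, σ a < σ b ↔ π (f a) < π (f b)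

/-- `π` avoids the pattern `σ`. -/
def AvoidsPat {n k : ℕ} (π : Equiv.Perm (Fin n)) (σ : Equiv.Perm (Fin k)) : Prop :=
  ¬ ContainsPat π σ

/-- `π` contains the consecutive pattern `σ`: some `k` consecutive positions of `π`
carry values order isomorphic to `σ`. -/
def ContainsConsecPat {n k : ℕ} (π : Equiv.Perm (Fin n)) (σ : Equiv.Perm (Fin k)) : Prop :=
  ∃ (i : ℕ) (h : i + k ≤ n), ∀ a b : Fin k,
    σ a < σ b ↔ π ⟨i + a.val, by have := a.isLt; omega⟩ < π ⟨i + b.val, by have := b.isLt; omega⟩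

/-- `π` avoids the consecutive pattern `σ`. -/
def AvoidsConsecPat {n k : ℕ} (π : Equiv.Perm (Fin n)) (σ : Equiv.Perm (Fin k)) : Prop :=
  ¬ ContainsConsecPat π σ

/-- the pattern 231 (0-indexed: 0 ↦ 1, 1 ↦ 2, 2 ↦ 0) -/
def p231 : Equiv.Perm (Fin 3) := c[0, 1, 2]

/-- the pattern 312 (0-indexed: 0 ↦ 2, 1 ↦ 0, 2 ↦ 1) -/
def p312 : Equiv.Perm (Fin 3) := c[0, 2, 1]

/-- the pattern 213 (0-indexed: 0 ↦ 1, 1 ↦ 0, 2 ↦ 2) -/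
def p213 : Equiv.Perm (Fin 3) := c[0, 1]

/-- the pattern 1432 (0-indexed: 0 ↦ 0, 1 ↦ 3, 2 ↦ 2, 3 ↦ 1) -/
def p1432 : Equiv.Perm (Fin 4) := c[1, 3]

/-- direct sum of two permutations -/
def dsum {k m : ℕ} (σ : Equiv.Perm (Fin k)) (τ : Equiv.Perm (Fin m)) :
    Equiv.Perm (Fin (k + m)) :=
  finSumFinEquiv.symm.trans ((Equiv.sumCongr σ τ).trans finSumFinEquiv)

/-- the Lucas numbers: L₁ = 1, L₂ = 3, L_m = L_{m-1} + L_{m-2} -/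
def lucas : ℕ → ℕ
  | 0 => 2
  | 1 => 1
  | n + 2 => lucas (n + 1) + lucas n

/-!
An occurrence of a pattern whose first entry is not its smallest one cannot start at the fixed
point `0` of `1 ⊕ τ`, since the value there is the least of all. Hence occurrences of such a
pattern (classical or consecutive) in `1 ⊕ τ` are exactly the shifted occurrences in `τ`; this
applies to `213` and `312`, and to squares because `(1 ⊕ τ)² = 1 ⊕ τ²`. Finally, `π 0 = 0`
says exactly that `π = 1 ⊕ τ` for some `τ`.
-/

open Equiv

/-- `τ ↦ 1 ⊕ τ`. -/
def oneSum (m : ℕ) : Perm (Fin m) →* Perm (Fin (m + 1)) :=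
  Perm.extendDomainHom (finSuccAboveEquiv 0)

@[simp]
lemma oneSum_apply_zero {m : ℕ} (τ : Perm (Fin m)) : oneSum m τ 0 = 0 :=
  Perm.extendDomain_apply_not_subtype _ _ (by simp)

@[simp]
lemma oneSum_apply_succ {m : ℕ} (τ : Perm (Fin m)) (i : Fin m) :
    oneSum m τ i.succ = (τ i).succ := by
  have := Perm.extendDomain_apply_image τ (finSuccAboveEquiv 0) i
  simp only [finSuccAboveEquiv_apply, Fin.succAbove_zero] at this
  exact this

lemma exists_oneSum_eq_iff {m : ℕ} (ρ : Perm (Fin (m + 1))) :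
    (∃ τ, oneSum m τ = ρ) ↔ ρ 0 = 0 := by
  refine ⟨by rintro ⟨τ, rfl⟩; simp, fun h0 => ?_⟩
  obtain ⟨⟨p, τ⟩, rfl⟩ := Perm.decomposeFin.symm.surjective ρ
  obtain rfl : p = 0 := by simpa using h0
  refine ⟨τ, Equiv.ext fun x => Fin.cases (by simp) (fun i => ?_) x⟩
  simp [Perm.decomposeFin_symm_apply_succ]

lemma permCongr_dsum_one {m : ℕ} (h : 1 + m = m + 1) (σ : Perm (Fin m)) :
    (finCongr h).permCongr (dsum 1 σ) = oneSum m σ := by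
  ext x
  refine Fin.cases ?_ (fun i => ?_) x
  · have : (finCongr h).symm 0 = Fin.castAdd m (0 : Fin 1) := rfl
    rw [Equiv.permCongr_apply, this]
    simp [dsum]
  · have : (finCongr h).symm i.succ = Fin.natAdd 1 i := by ext; simp [Nat.add_comm]
    rw [Equiv.permCongr_apply, this]
    simp [dsum, Nat.add_comm]

lemma apply_zero_eq_zero_of_forall_lt_iff {k m : ℕ} {p : Perm (Fin (k + 1))}
    {ρ : Perm (Fin (m + 1))} {f : Fin (k + 1) → Fin (m + 1)}
    (hf : ∀ a b, p a < p b ↔ ρ (f a) < ρ (f b)) (h0 : ρ (f 0) = 0) : p 0 = 0 := by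
  by_contra hp
  have : p (p⁻¹ 0) < p 0 := by simpa [Fin.pos_iff_ne_zero] using hp
  exact Fin.not_lt_zero _ (h0 ▸ (hf _ _).1 this)

lemma containsPat_oneSum_iff {k m : ℕ} {p : Perm (Fin (k + 1))} (hp : p 0 ≠ 0)
    (τ : Perm (Fin m)) : ContainsPat (oneSum m τ) p ↔ ContainsPat τ p := by
  constructor
  · rintro ⟨f, hmono, hf⟩
    have hne : ∀ a, f a ≠ 0 := fun a ha => hp <| apply_zero_eq_zero_of_forall_lt_iff hf <| by
      rw [nonpos_iff_eq_zero.1 ((hmono.monotone (Fin.zero_le a)).trans_eq ha), oneSum_apply_zero]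
    obtain ⟨g, rfl⟩ : ∃ g, f = Fin.succ ∘ g := ⟨fun a => (f a).pred (hne a), by ext; simp⟩
    exact ⟨g, fun a b hab => by simpa using hmono hab, fun a b => by simp [hf]⟩
  · rintro ⟨f, hmono, hf⟩
    exact ⟨Fin.succ ∘ f, Fin.strictMono_succ.comp hmono, fun a b => by simp [hf]⟩

lemma containsConsecPat_oneSum_iff {k m : ℕ} {p : Perm (Fin (k + 1))} (hp : p 0 ≠ 0)
    (τ : Perm (Fin m)) : ContainsConsecPat (oneSum m τ) p ↔ ContainsConsecPat τ p := by
  have shift : ∀ i c (h : i + 1 + c < m + 1),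
      (⟨i + 1 + c, h⟩ : Fin (m + 1)) = Fin.succ ⟨i + c, by omega⟩ := by
    intro i c h; ext; simp only [Fin.val_succ]; omega
  constructor
  · rintro ⟨_ | i, hi, hf⟩
    · exact absurd (apply_zero_eq_zero_of_forall_lt_iff hf (by simp)) hp
    · exact ⟨i, by omega, fun a b => by
        simp only [hf, shift, oneSum_apply_succ, Fin.succ_lt_succ_iff]⟩
  · rintro ⟨i, hi, hf⟩
    exact ⟨i + 1, by omega, fun a b => by
      simp only [hf, shift, oneSum_apply_succ, Fin.succ_lt_succ_iff]⟩

theorem stmt9 (n : ℕ) (hn : 3 ≤ n) (π : Equiv.Perm (Fin n)) :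
    (AvoidsPat π p213 ∧ AvoidsPat π p312 ∧ AvoidsConsecPat (π ^ 2) p213 ∧
        π ⟨0, by omega⟩ = ⟨0, by omega⟩) ↔
      ∃ σ : Equiv.Perm (Fin (n - 1)),
        AvoidsPat σ p213 ∧ AvoidsPat σ p312 ∧ AvoidsConsecPat (σ ^ 2) p213 ∧
        π = (finCongr (by omega : 1 + (n - 1) = n)).permCongr
              (dsum (1 : Equiv.Perm (Fin 1)) σ) := by
  obtain ⟨m, rfl⟩ : ∃ m, n = m + 1 := ⟨n - 1, by omega⟩
  have h213 : p213 0 ≠ 0 := by decide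
  have h312 : p312 0 ≠ 0 := by decide
  simp only [permCongr_dsum_one]
  constructor
  · rintro ⟨hπ213, hπ312, hπ2, hπ0⟩
    obtain ⟨σ, rfl⟩ := (exists_oneSum_eq_iff π).2 hπ0
    simp only [AvoidsPat, AvoidsConsecPat, ← map_pow, containsPat_oneSum_iff h213,
      containsPat_oneSum_iff h312, containsConsecPat_oneSum_iff h213] at hπ213 hπ312 hπ2
    exact ⟨σ, hπ213, hπ312, hπ2, rfl⟩
  · rintro ⟨σ, hσ213, hσ312, hσ2, rfl⟩
    simp only [AvoidsPat, AvoidsConsecPat, ← map_pow, containsPat_oneSum_iff h213,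
      containsPat_oneSum_iff h312, containsConsecPat_oneSum_iff h213]
    exact ⟨hσ213, hσ312, hσ2, oneSum_apply_zero σ⟩
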